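/- Let D be a finite 2-semilattice and let I be a nonempty standard (2,3)-instance over D with variable set X, potatoes (P_x) and relations (R_{xy}). For each x let P'_x = {a ∈ P_x : a is reachable from every element of P_x within the digraph on P_x}, and for each (x,y) let R'_{xy} = {p ∈ R_{xy} : p is reachable from every element of R_{xy} within the digraph on R_{xy} under the coordinatewise operation}. Then every P'_x and every R'_{xy} is nonempty, R'_{xy} ⊆ P'_x × P'_y for all x, y, and the primed data (X, (P'_x), (R'_{xy})) again satisfies (P1) and (P2); hence it is a nonempty standard (2,3)-instance over D. -/

import Mathlib

/-- Reachability within a subset `S` via the 2-semilattice digraph `a → b ↔ a * b = b`: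
a directed walk from `a` to `b` all of whose vertices lie in `S`. -/
def ReachIn {D : Type*} [Mul D] (S : Set D) (a b : D) : Prop :=
  Relation.ReflTransGen (fun x y => x ∈ S ∧ y ∈ S ∧ x * y = y) a b

/-- A standard (2,3)-instance over a set `D` with a binary operation, with variable set `X`. -/
structure StdInstance (D : Type*) [Mul D] (X : Type*) where
  P : X → Set D
  R : X → X → Set (D × D)
  P_closed : ∀ x, ∀ a ∈ P x, ∀ b ∈ P x, a * b ∈ P x
  R_sub : ∀ x y, R x y ⊆ (P x) ×ˢ (P y)
  R_closed : ∀ x y, ∀ p ∈ R x y, ∀ q ∈ R x y, p * q ∈ R x y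
  P1 : ∀ x, R x x = {p : D × D | p.1 ∈ P x ∧ p.1 = p.2}
  P2 : ∀ x y z, ∀ p ∈ R x y, ∃ c ∈ P z, (p.1, c) ∈ R x z ∧ (p.2, c) ∈ R y z
  P3 : ∀ x y, (P x).Nonempty → (P y).Nonempty →
      (∀ a ∈ P x, ∃ b ∈ P y, (a, b) ∈ R x y) ∧ (∀ b ∈ P y, ∃ a ∈ P x, (a, b) ∈ R x y)
  P4 : ∀ x y, R y x = {p : D × D | (p.2, p.1) ∈ R x y}

/-!
In a finite subset `S` closed under `·` of a commutative magma with `a · (a · b) = a · b`, the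
elements reachable from all of `S` form a nonempty closed "top component": it contains the product
of all elements of `S`, since `a → a · b` is always an edge. A multiplicative map `f` sends the top
component of `S` onto that of `f '' S`, because a walk in `f '' S` lifts to a walk in `S` by
multiplying with preimages of its vertices.

Each condition on the primed data is therefore read off from the unprimed one through an image:
`P'_x` is the first projection of `R'_{xy}`, `R'_{xx}` the diagonal image of `P'_x`, `R'_{yx}` the
swap of `R'_{xy}`, and (P2) follows by projecting the top component of the set of triangles
`{((a, b), c) | (a, b) ∈ R_{xy}, (a, c) ∈ R_{xz}, (b, c) ∈ R_{yz}}` onto its three edges.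
-/

class IsMulAbsorbing (M : Type*) [Mul M] : Prop where
  mul_mul_self_eq : ∀ a b : M, a * (a * b) = a * b

instance {M N : Type*} [Mul M] [Mul N] [IsMulCommutative M] [IsMulCommutative N] :
    IsMulCommutative (M × N) :=
  .of_comm fun _ _ => Prod.ext (mul_comm' _ _) (mul_comm' _ _)

instance {M N : Type*} [Mul M] [Mul N] [IsMulAbsorbing M] [IsMulAbsorbing N] :
    IsMulAbsorbing (M × N) :=
  ⟨fun _ _ => Prod.ext (IsMulAbsorbing.mul_mul_self_eq _ _) (IsMulAbsorbing.mul_mul_self_eq _ _)⟩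

section TopComponent

variable {M N : Type*} [Mul M] [Mul N] {S : Set M} {a b : M}

def topComponent (S : Set M) : Set M := {a ∈ S | ∀ b ∈ S, ReachIn S b a}

lemma ReachIn.mem_of_mem (h : ReachIn S a b) (ha : a ∈ S) : b ∈ S := by
  induction h with
  | refl => exact ha
  | tail _ hstep _ => exact hstep.2.1

lemma reachIn_mul_right [IsMulAbsorbing M] (hS : ∀ a ∈ S, ∀ b ∈ S, a * b ∈ S)
    (ha : a ∈ S) (hb : b ∈ S) : ReachIn S a (a * b) :=
  .single ⟨ha, hS a ha b hb, IsMulAbsorbing.mul_mul_self_eq a b⟩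

lemma ReachIn.mem_topComponent (h : ReachIn S a b) (ha : a ∈ topComponent S) :
    b ∈ topComponent S :=
  ⟨h.mem_of_mem ha.1, fun c hc => (ha.2 c hc).trans h⟩

lemma mul_mem_topComponent [IsMulAbsorbing M] (hS : ∀ a ∈ S, ∀ b ∈ S, a * b ∈ S)
    (ha : a ∈ topComponent S) (hb : b ∈ topComponent S) : a * b ∈ topComponent S :=
  (reachIn_mul_right hS ha.1 hb.1).mem_topComponent ha

lemma topComponent_nonempty [Finite M] [IsMulCommutative M] [IsMulAbsorbing M]
    (hS : ∀ a ∈ S, ∀ b ∈ S, a * b ∈ S) (hne : S.Nonempty) : (topComponent S).Nonempty := by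
  suffices ∃ a ∈ S, ∀ b ∈ S, ReachIn S b a by simpa [topComponent]
  refine Set.Finite.induction_on_subset (motive := fun F _ => ∃ a ∈ S, ∀ b ∈ F, ReachIn S b a)
    S (Set.toFinite S) ?_ ?_
  · obtain ⟨a, ha⟩ := hne
    exact ⟨a, ha, by simp⟩
  · rintro b F hb - - ⟨a, ha, hreach⟩
    refine ⟨a * b, hS a ha b hb, ?_⟩
    rintro c (rfl | hc)
    · exact mul_comm' c a ▸ reachIn_mul_right hS hb ha
    · exact (hreach c hc).trans (reachIn_mul_right hS ha hb)

variable {f : M → N}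

lemma ReachIn.image (hf : ∀ a b, f (a * b) = f a * f b) (h : ReachIn S a b) :
    ReachIn (f '' S) (f a) (f b) := by
  induction h with
  | refl => exact .refl
  | tail _ hstep ih =>
      exact ih.tail ⟨⟨_, hstep.1, rfl⟩, ⟨_, hstep.2.1, rfl⟩, by rw [← hf, hstep.2.2]⟩

lemma ReachIn.exists_lift [IsMulAbsorbing M] (hf : ∀ a b, f (a * b) = f a * f b)
    (hS : ∀ a ∈ S, ∀ b ∈ S, a * b ∈ S) {u t : N} (h : ReachIn (f '' S) u t)
    (ha : a ∈ S) (hfa : f a = u) : ∃ b ∈ S, ReachIn S a b ∧ f b = t := by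
  induction h using Relation.ReflTransGen.head_induction_on generalizing a with
  | refl => exact ⟨a, ha, .refl, hfa⟩
  | head hstep _ ih =>
      obtain ⟨s, hs, rfl⟩ := hstep.2.1
      obtain ⟨b, hb, hab, rfl⟩ := ih (hS a ha s hs) (by rw [hf, hfa, hstep.2.2])
      exact ⟨b, hb, (reachIn_mul_right hS ha hs).trans hab, rfl⟩

lemma image_topComponent [Finite M] [IsMulCommutative M] [IsMulAbsorbing M]
    (hf : ∀ a b, f (a * b) = f a * f b) (hS : ∀ a ∈ S, ∀ b ∈ S, a * b ∈ S)
    (hne : S.Nonempty) : f '' topComponent S = topComponent (f '' S) := by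
  apply Set.Subset.antisymm
  · rintro _ ⟨a, ha, rfl⟩
    refine ⟨⟨a, ha.1, rfl⟩, ?_⟩
    rintro _ ⟨b, hb, rfl⟩
    exact (ha.2 b hb).image hf
  · intro t ht
    obtain ⟨a, ha⟩ := topComponent_nonempty hS hne
    obtain ⟨b, -, hab, rfl⟩ := (ht.2 (f a) ⟨a, ha.1, rfl⟩).exists_lift hf hS ha.1 rfl
    exact ⟨b, hab.mem_topComponent ha, rfl⟩

end TopComponent

lemma Set.image_diag {α : Type*} (S : Set α) :
    (fun a => (a, a)) '' S = {p : α × α | p.1 ∈ S ∧ p.1 = p.2} := by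
  ext ⟨a, b⟩
  constructor
  · rintro ⟨c, hc, h⟩
    cases h
    exact ⟨hc, rfl⟩
  · rintro ⟨ha, rfl : a = b⟩
    exact ⟨a, ha, rfl⟩

namespace StdInstance

variable {D X : Type*} [Mul D] (I : StdInstance D X)

lemma fst_image_R (hne : ∀ x, (I.P x).Nonempty) (x y : X) : Prod.fst '' I.R x y = I.P x := by
  refine Set.Subset.antisymm (Set.image_subset_iff.2 fun p hp => (I.R_sub x y hp).1) ?_
  intro a ha
  obtain ⟨b, -, hab⟩ := (I.P3 x y (hne x) (hne y)).1 a ha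
  exact ⟨(a, b), hab, rfl⟩

lemma snd_image_R (hne : ∀ x, (I.P x).Nonempty) (x y : X) : Prod.snd '' I.R x y = I.P y := by
  refine Set.Subset.antisymm (Set.image_subset_iff.2 fun p hp => (I.R_sub x y hp).2) ?_
  intro b hb
  obtain ⟨a, -, hab⟩ := (I.P3 x y (hne x) (hne y)).2 b hb
  exact ⟨(a, b), hab, rfl⟩

lemma R_nonempty (hne : ∀ x, (I.P x).Nonempty) (x y : X) : (I.R x y).Nonempty :=
  Set.image_nonempty.1 (I.fst_image_R hne x y ▸ hne x)

lemma swap_image_R (x y : X) : Prod.swap '' I.R x y = I.R y x := by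
  rw [I.P4 x y, Set.image_swap_eq_preimage_swap]
  rfl

def triangles (x y z : X) : Set ((D × D) × D) :=
  {w | w.1 ∈ I.R x y ∧ (w.1.1, w.2) ∈ I.R x z ∧ (w.1.2, w.2) ∈ I.R y z}

lemma triangles_mul_mem (x y z : X) :
    ∀ v ∈ I.triangles x y z, ∀ w ∈ I.triangles x y z, v * w ∈ I.triangles x y z :=
  fun _ hv _ hw => ⟨I.R_closed x y _ hv.1 _ hw.1, I.R_closed x z _ hv.2.1 _ hw.2.1,
    I.R_closed y z _ hv.2.2 _ hw.2.2⟩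

lemma fst_image_triangles (x y z : X) : Prod.fst '' I.triangles x y z = I.R x y := by
  refine Set.Subset.antisymm (Set.image_subset_iff.2 fun w hw => hw.1) ?_
  intro p hp
  obtain ⟨c, -, hpc⟩ := I.P2 x y z p hp
  exact ⟨(p, c), ⟨hp, hpc⟩, rfl⟩

lemma image_triangles_xz (x y z : X) :
    (fun w : (D × D) × D => (w.1.1, w.2)) '' I.triangles x y z = I.R x z := by
  refine Set.Subset.antisymm (Set.image_subset_iff.2 fun w hw => hw.2.1) ?_
  intro p hp
  obtain ⟨b, -, hpb, hbp⟩ := I.P2 x z y p hp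
  rw [I.P4 y z] at hbp
  exact ⟨((p.1, b), p.2), ⟨hpb, hp, hbp⟩, rfl⟩

lemma image_triangles_yz (x y z : X) :
    (fun w : (D × D) × D => (w.1.2, w.2)) '' I.triangles x y z = I.R y z := by
  refine Set.Subset.antisymm (Set.image_subset_iff.2 fun w hw => hw.2.2) ?_
  intro p hp
  obtain ⟨a, -, hpa, hpa'⟩ := I.P2 y z x p hp
  rw [I.P4 x y] at hpa
  rw [I.P4 x z] at hpa'
  exact ⟨((a, p.1), p.2), ⟨hpa, hpa', hp⟩, rfl⟩

variable [Finite D] [IsMulCommutative D] [IsMulAbsorbing D]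

lemma fst_image_topComponent_R (hne : ∀ x, (I.P x).Nonempty) (x y : X) :
    Prod.fst '' topComponent (I.R x y) = topComponent (I.P x) := by
  rw [image_topComponent (fun _ _ => rfl) (I.R_closed x y) (I.R_nonempty hne x y),
    I.fst_image_R hne]

lemma snd_image_topComponent_R (hne : ∀ x, (I.P x).Nonempty) (x y : X) :
    Prod.snd '' topComponent (I.R x y) = topComponent (I.P y) := by
  rw [image_topComponent (fun _ _ => rfl) (I.R_closed x y) (I.R_nonempty hne x y),
    I.snd_image_R hne]

lemma topComponent_R_subset (hne : ∀ x, (I.P x).Nonempty) (x y : X) :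
    topComponent (I.R x y) ⊆ topComponent (I.P x) ×ˢ topComponent (I.P y) := fun _ hp =>
  ⟨I.fst_image_topComponent_R hne x y ▸ Set.mem_image_of_mem _ hp,
    I.snd_image_topComponent_R hne x y ▸ Set.mem_image_of_mem _ hp⟩

lemma topComponent_R_self (hne : ∀ x, (I.P x).Nonempty) (x : X) :
    topComponent (I.R x x) = {p : D × D | p.1 ∈ topComponent (I.P x) ∧ p.1 = p.2} := by
  rw [I.P1, ← Set.image_diag, ← image_topComponent (fun _ _ => rfl) (I.P_closed x) (hne x),
    Set.image_diag]

lemma topComponent_R_swap (hne : ∀ x, (I.P x).Nonempty) (x y : X) :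
    topComponent (I.R y x) = {p : D × D | (p.2, p.1) ∈ topComponent (I.R x y)} := by
  rw [← I.swap_image_R, ← image_topComponent (fun _ _ => rfl) (I.R_closed x y)
    (I.R_nonempty hne x y), Set.image_swap_eq_preimage_swap]
  rfl

lemma exists_topComponent_R_of_mem (hne : ∀ x, (I.P x).Nonempty) (x y z : X) :
    ∀ p ∈ topComponent (I.R x y), ∃ c ∈ topComponent (I.P z),
      (p.1, c) ∈ topComponent (I.R x z) ∧ (p.2, c) ∈ topComponent (I.R y z) := by
  have hT : (I.triangles x y z).Nonempty := by
    rw [← Set.image_nonempty (f := Prod.fst), I.fst_image_triangles]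
    exact I.R_nonempty hne x y
  have image_top {f : (D × D) × D → D × D} (hf : ∀ v w, f (v * w) = f v * f w) :
      f '' topComponent (I.triangles x y z) = topComponent (f '' I.triangles x y z) :=
    image_topComponent hf (I.triangles_mul_mem x y z) hT
  intro p hp
  rw [← I.fst_image_triangles, ← image_top (fun _ _ => rfl)] at hp
  obtain ⟨⟨q, c⟩, hw, rfl⟩ := hp
  have hxz : (q.1, c) ∈ topComponent (I.R x z) := by
    rw [← I.image_triangles_xz x y z, ← image_top (fun _ _ => rfl)]
    exact ⟨_, hw, rfl⟩
  have hyz : (q.2, c) ∈ topComponent (I.R y z) := by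
    rw [← I.image_triangles_yz x y z, ← image_top (fun _ _ => rfl)]
    exact ⟨_, hw, rfl⟩
  exact ⟨c, (I.topComponent_R_subset hne x z hxz).2, hxz, hyz⟩

lemma topComponent_R_surjective (hne : ∀ x, (I.P x).Nonempty) (x y : X) :
    (∀ a ∈ topComponent (I.P x), ∃ b ∈ topComponent (I.P y), (a, b) ∈ topComponent (I.R x y)) ∧
      ∀ b ∈ topComponent (I.P y), ∃ a ∈ topComponent (I.P x), (a, b) ∈ topComponent (I.R x y) := by
  constructor
  · intro a ha
    rw [← I.fst_image_topComponent_R hne x y] at ha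
    obtain ⟨p, hp, rfl⟩ := ha
    exact ⟨p.2, (I.topComponent_R_subset hne x y hp).2, hp⟩
  · intro b hb
    rw [← I.snd_image_topComponent_R hne x y] at hb
    obtain ⟨p, hp, rfl⟩ := hb
    exact ⟨p.1, (I.topComponent_R_subset hne x y hp).1, hp⟩

def topInstance (hne : ∀ x, (I.P x).Nonempty) : StdInstance D X where
  P x := topComponent (I.P x)
  R x y := topComponent (I.R x y)
  P_closed x _ ha _ hb := mul_mem_topComponent (I.P_closed x) ha hb
  R_sub := I.topComponent_R_subset hne
  R_closed x y _ hp _ hq := mul_mem_topComponent (I.R_closed x y) hp hq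
  P1 := I.topComponent_R_self hne
  P2 := I.exists_topComponent_R_of_mem hne
  P3 x y _ _ := I.topComponent_R_surjective hne x y
  P4 := I.topComponent_R_swap hne

end StdInstance

theorem stmt8_general {D : Type*} [Mul D] [Finite D]
    (hcomm : ∀ x y : D, x * y = y * x)
    (habs : ∀ x y : D, x * (x * y) = x * y)
    {X : Type*} (I : StdInstance D X)
    (hne : ∀ x, (I.P x).Nonempty) :
    let P' : X → Set D := fun x => {a ∈ I.P x | ∀ b ∈ I.P x, ReachIn (I.P x) b a}
    let R' : X → X → Set (D × D) :=
      fun x y => {p ∈ I.R x y | ∀ q ∈ I.R x y, ReachIn (I.R x y) q p}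
    (∀ x, (P' x).Nonempty) ∧ (∀ x y, (R' x y).Nonempty) ∧
      (∀ x y, R' x y ⊆ (P' x) ×ˢ (P' y)) ∧
      ∃ J : StdInstance D X, J.P = P' ∧ J.R = R' := by
  have : IsMulCommutative D := .of_comm hcomm
  have : IsMulAbsorbing D := ⟨habs⟩
  exact ⟨fun x => topComponent_nonempty (I.P_closed x) (hne x),
    fun x y => topComponent_nonempty (I.R_closed x y) (I.R_nonempty hne x y),
    I.topComponent_R_subset hne, I.topInstance hne, rfl, rfl⟩

theorem stmt8 {D : Type*} [Mul D] [Finite D]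
    (hidem : ∀ x : D, x * x = x)
    (hcomm : ∀ x y : D, x * y = y * x)
    (habs : ∀ x y : D, x * (x * y) = x * y)
    {X : Type*} [Finite X] (I : StdInstance D X)
    (hne : ∀ x, (I.P x).Nonempty) :
    let P' : X → Set D := fun x => {a ∈ I.P x | ∀ b ∈ I.P x, ReachIn (I.P x) b a}
    let R' : X → X → Set (D × D) :=
      fun x y => {p ∈ I.R x y | ∀ q ∈ I.R x y, ReachIn (I.R x y) q p}
    (∀ x, (P' x).Nonempty) ∧ (∀ x y, (R' x y).Nonempty) ∧
      (∀ x y, R' x y ⊆ (P' x) ×ˢ (P' y)) ∧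
      ∃ J : StdInstance D X, J.P = P' ∧ J.R = R' :=
  stmt8_general hcomm habs I hne
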